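/- arXiv:1907.12086 — 3 statements merged into one kernel-verified Lean document; each statement's English description precedes it below -/
import Mathlib

section
/- Let m be a positive integer with m ≡ 1 (mod 3), t ∈ F_{2^{3m}} a root of t^3 + t + 1 = 0, and v = a_1 t + a_2 t^2 with a_1, a_2 ∈ F_{2^m}. If v^{1 + 2^m + 2^{2m}} = 1, then a_1^3 + a_2^3 + a_1 a_2^2 + 1 = 0. -/
/-!
Since `2 ^ m ≡ 2 (mod 7)` for `m ≡ 1 (mod 3)` and `t ^ 7 = 1`, the Frobenius `x ↦ x ^ 2 ^ m`
sends `t` to `t ^ 2` and fixes the `aᵢ`, so the conjugates of `v = a₁ t + a₂ t ^ 2` are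
`a₁ t ^ 2 + a₂ t ^ 4` and `a₁ t ^ 4 + a₂ t`. Expanding the product of the three conjugates
and reducing with `t ^ 3 = t + 1` leaves `a₁ ^ 3 + a₂ ^ 3 + a₁ a₂ ^ 2`, which must equal `1`.
-/

theorem Nat.two_pow_mod_seven (n : ℕ) : 2 ^ n % 7 = 2 ^ (n % 3) % 7 := by
  conv_lhs => rw [← Nat.div_add_mod n 3, pow_add, pow_mul]
  simp [Nat.mul_mod, Nat.pow_mod]

theorem pow_two_pow_eq_pow_two_pow_mod_three {M : Type*} [Monoid M] {t : M} (h7 : t ^ 7 = 1)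
    (n : ℕ) :
    t ^ 2 ^ n = t ^ 2 ^ (n % 3) := by
  rw [pow_eq_pow_mod _ h7, Nat.two_pow_mod_seven, ← pow_eq_pow_mod _ h7]

section CharTwo

variable {R : Type*} [CommRing R] [CharP R 2]

theorem pow_seven_eq_one_of_cubic {t : R} (ht : t ^ 3 + t + 1 = 0) : t ^ 7 = 1 := by
  linear_combination (t ^ 4 - t ^ 2 - t + 1) * ht +
    (t ^ 2 - 1) * (CharTwo.two_eq_zero : (2 : R) = 0)

theorem linear_add_quadratic_pow_two_pow {a b : R} (n : ℕ) (ha : a ^ 2 ^ n = a)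
    (hb : b ^ 2 ^ n = b) (t : R) :
    (a * t + b * t ^ 2) ^ 2 ^ n = a * t ^ 2 ^ n + b * (t ^ 2 ^ n) ^ 2 := by
  rw [add_pow_char_pow, mul_pow, mul_pow, ha, hb, pow_right_comm]

theorem cubic_norm_eq {t : R} (ht : t ^ 3 + t + 1 = 0) (a b : R) :
    (a * t + b * t ^ 2) * (a * t ^ 2 + b * t ^ 4) * (a * t ^ 4 + b * t) =
      a ^ 3 + b ^ 3 + a * b ^ 2 := by
  linear_combination (a ^ 3 + b ^ 3 + a ^ 2 * b * (t ^ 2 + t) + a * b ^ 2 * t ^ 3) *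
      pow_seven_eq_one_of_cubic ht + (a ^ 2 * b * t + a * b ^ 2 * (t ^ 3 + t ^ 2 - t - 1)) * ht +
    a * b ^ 2 * t * (CharTwo.two_eq_zero : (2 : R) = 0)

end CharTwo

theorem stmt_9_general (m : ℕ) (hm3 : m % 3 = 1)
    (F : Type*) [Field F] [Fintype F] (hF : Fintype.card F = 2 ^ (3 * m))
    (t : F) (ht : t ^ 3 + t + 1 = 0)
    (a1 a2 : F) (ha1 : a1 ^ (2 ^ m) = a1) (ha2 : a2 ^ (2 ^ m) = a2)
    (hnorm : (a1 * t + a2 * t ^ 2) ^ (1 + 2 ^ m + 2 ^ (2 * m)) = 1) :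
    a1 ^ 3 + a2 ^ 3 + a1 * a2 ^ 2 + 1 = 0 := by
  have : CharP F 2 := charP_of_card_eq_prime_pow hF
  have h7 := pow_seven_eq_one_of_cubic ht
  have htm : t ^ 2 ^ m = t ^ 2 := by
    rw [pow_two_pow_eq_pow_two_pow_mod_three h7, hm3, pow_one]
  have ht2m : t ^ 2 ^ (2 * m) = t ^ 4 := by
    rw [pow_two_pow_eq_pow_two_pow_mod_three h7, show 2 * m % 3 = 2 by omega]
    norm_num
  have ht8 : (t ^ 4) ^ 2 = t := by
    rw [← pow_mul, show 4 * 2 = 7 + 1 by rfl, pow_succ, h7, one_mul]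
  have fixed_twice {a : F} (ha : a ^ 2 ^ m = a) : a ^ 2 ^ (2 * m) = a := by
    rw [two_mul, pow_add, pow_mul, ha, ha]
  have conj1 : (a1 * t + a2 * t ^ 2) ^ 2 ^ m = a1 * t ^ 2 + a2 * t ^ 4 := by
    rw [linear_add_quadratic_pow_two_pow m ha1 ha2, htm]
    ring
  have conj2 : (a1 * t + a2 * t ^ 2) ^ 2 ^ (2 * m) = a1 * t ^ 4 + a2 * t := by
    rw [linear_add_quadratic_pow_two_pow (2 * m) (fixed_twice ha1) (fixed_twice ha2), ht2m, ht8]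
  rw [pow_add, pow_add, pow_one, conj1, conj2, cubic_norm_eq ht] at hnorm
  exact CharTwo.add_eq_zero.mpr hnorm

theorem stmt_9 (m : ℕ) (hm : 0 < m) (hm3 : m % 3 = 1)
    (F : Type*) [Field F] [Fintype F] (hF : Fintype.card F = 2 ^ (3 * m))
    (t : F) (ht : t ^ 3 + t + 1 = 0)
    (a1 a2 : F) (ha1 : a1 ^ (2 ^ m) = a1) (ha2 : a2 ^ (2 ^ m) = a2)
    (hnorm : (a1 * t + a2 * t ^ 2) ^ (1 + 2 ^ m + 2 ^ (2 * m)) = 1) :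
    a1 ^ 3 + a2 ^ 3 + a1 * a2 ^ 2 + 1 = 0 :=
  stmt_9_general m hm3 F hF t ht a1 a2 ha1 ha2 hnorm
end

section
/- Let m be a positive integer and α, β ∈ F_{2^m}^*. The cubic x^3 + αx + β has exactly one root in F_{2^m} if and only if Tr_{F_{2^m}/F_2}(1 + α^3 β^{-2}) = 1. -/
/-!
Write `Tr` for the trace to `𝔽₂`. By Artin–Schreier, `u² + u = c` is solvable iff `Tr c = 0`:
the map `u ↦ u² + u` is `𝔽₂`-linear with kernel `𝔽₂`, its image lies in `ker Tr`, and both are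
hyperplanes. If `r` is a root, the cubic is `(x - r)(x² + r x + r² + α)`; substituting `x = r u`
turns the quadratic factor into `u² + u = 1 + α/r²`, and `1 + α/r²` has the same trace as
`1 + α³/β²`. So `r` is the only root iff `Tr(1 + α³/β²) = 1`. If there is no root, the cubic is
irreducible and splits in the cubic extension `L` it defines, so `Tr_L(1 + α³/β²) = 0`; as
`[L : F]` is odd, `Tr_L` restricts to `Tr_F` on `F`.
-/

open Polynomial

theorem cubic_eq_mul_of_root {R : Type*} [CommRing R] {α β r : R}
    (hr : r ^ 3 + α * r + β = 0) (x : R) :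
    x ^ 3 + α * x + β = (x - r) * (x ^ 2 + r * x + (r ^ 2 + α)) := by
  linear_combination hr

namespace FiniteField

section ArtinSchreier

variable {K : Type*} [Field K] [Finite K] [Algebra (ZMod 2) K]

omit [Finite K] in
theorem charP_two_of_zmod : CharP K 2 :=
  charP_of_injective_algebraMap (algebraMap (ZMod 2) K).injective 2

theorem trace_sq (u : K) : Algebra.trace (ZMod 2) K (u ^ 2) = Algebra.trace (ZMod 2) K u := by
  simpa using Algebra.trace_eq_of_algEquiv (frobeniusAlgEquivOfAlgebraic (ZMod 2) K) u

theorem trace_sq_add_self (u : K) : Algebra.trace (ZMod 2) K (u ^ 2 + u) = 0 := by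
  rw [map_add, trace_sq, CharTwo.add_self_eq_zero]

variable (K) in
noncomputable def artinSchreier : K →ₗ[ZMod 2] K :=
  (frobeniusAlgEquivOfAlgebraic (ZMod 2) K).toLinearMap + LinearMap.id

theorem artinSchreier_apply (u : K) : artinSchreier K u = u ^ 2 + u := by
  simp [artinSchreier]

theorem ker_artinSchreier : LinearMap.ker (artinSchreier K) = Submodule.span (ZMod 2) {1} := by
  have := charP_two_of_zmod (K := K)
  have h2 : (2 : K) = 0 := CharTwo.two_eq_zero
  ext u
  rw [LinearMap.mem_ker, artinSchreier_apply, Submodule.mem_span_singleton]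
  constructor
  · intro h
    have : u * (u + 1) = 0 := by linear_combination h
    rcases mul_eq_zero.mp this with h0 | h1
    · exact ⟨0, by simp [h0]⟩
    · exact ⟨1, by rw [one_smul]; linear_combination -h1 + h2⟩
  · rintro ⟨a, rfl⟩
    obtain rfl | rfl : a = 0 ∨ a = 1 := by revert a; decide
    · simp
    · rw [one_smul]; linear_combination h2

theorem range_artinSchreier : LinearMap.range (artinSchreier K) =
    LinearMap.ker (Algebra.trace (ZMod 2) K) := by
  have hle : LinearMap.range (artinSchreier K) ≤ LinearMap.ker (Algebra.trace (ZMod 2) K) := by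
    rintro _ ⟨u, rfl⟩
    rw [LinearMap.mem_ker, artinSchreier_apply, trace_sq_add_self]
  refine Submodule.eq_of_le_of_finrank_eq hle ?_
  have hAS := LinearMap.finrank_range_add_finrank_ker (artinSchreier K)
  have htr := LinearMap.finrank_range_add_finrank_ker (Algebra.trace (ZMod 2) K)
  rw [ker_artinSchreier, finrank_span_singleton one_ne_zero] at hAS
  rw [LinearMap.range_eq_top.mpr (Algebra.trace_surjective _ _), finrank_top,
    Module.finrank_self] at htr
  omega

theorem exists_sq_add_self_eq_iff_trace_eq_zero (c : K) :
    (∃ u, u ^ 2 + u = c) ↔ Algebra.trace (ZMod 2) K c = 0 := by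
  rw [← LinearMap.mem_ker, ← range_artinSchreier]
  simp [artinSchreier_apply]

end ArtinSchreier

section CubicWithRoot

variable {K : Type*} [Field K] [Finite K] [Algebra (ZMod 2) K] {α β r : K}

theorem exists_cofactor_root_iff_trace_eq_zero (hβ : β ≠ 0) (hr : r ^ 3 + α * r + β = 0) :
    (∃ x, x ^ 2 + r * x + (r ^ 2 + α) = 0) ↔
      Algebra.trace (ZMod 2) K (1 + α ^ 3 * β⁻¹ ^ 2) = 0 := by
  have := charP_two_of_zmod (K := K)
  have h2 : (2 : K) = 0 := CharTwo.two_eq_zero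
  have hr0 : r ≠ 0 := by
    rintro rfl
    exact hβ (by linear_combination hr)
  have hc : 1 + α ^ 3 * β⁻¹ ^ 2 =
      (1 + α * r⁻¹ ^ 2) + ((α * r * β⁻¹) ^ 2 + α * r * β⁻¹) := by
    field_simp
    linear_combination (α ^ 2 * r - α * β) * hr - α ^ 2 * r ^ 4 * h2
  rw [hc, map_add, trace_sq_add_self, add_zero, ← exists_sq_add_self_eq_iff_trace_eq_zero]
  constructor
  · rintro ⟨x, hx⟩
    refine ⟨x * r⁻¹, ?_⟩
    field_simp
    linear_combination hx - (r ^ 2 + α) * h2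
  · rintro ⟨u, hu⟩
    refine ⟨r * u, ?_⟩
    field_simp at hu
    linear_combination hu + (r ^ 2 + α) * h2

theorem existsUnique_cubic_root_iff_trace_eq_one (hβ : β ≠ 0) (hr : r ^ 3 + α * r + β = 0) :
    (∃! x, x ^ 3 + α * x + β = 0) ↔ Algebra.trace (ZMod 2) K (1 + α ^ 3 * β⁻¹ ^ 2) = 1 := by
  have := charP_two_of_zmod (K := K)
  have h2 : (2 : K) = 0 := CharTwo.two_eq_zero
  have hZ2 : ∀ a : ZMod 2, a ≠ 0 ↔ a = 1 := by decide
  rw [← hZ2, Ne, ← exists_cofactor_root_iff_trace_eq_zero hβ hr, not_exists]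
  constructor
  · rintro ⟨x, -, huniq⟩ s hs
    have hs_root : s ^ 3 + α * s + β = 0 := by rw [cubic_eq_mul_of_root hr, hs, mul_zero]
    have hsr : s = r := (huniq s hs_root).trans (huniq r hr).symm
    subst hsr
    -- a double root `s` forces `α = s²`, hence `β = -(s³ + α s) = -2 s³ = 0`
    exact hβ (by linear_combination hr - s * hs + s ^ 3 * h2)
  · intro hq
    refine ⟨r, hr, fun y (hy : y ^ 3 + α * y + β = 0) => ?_⟩
    rw [cubic_eq_mul_of_root hr] at hy
    exact sub_eq_zero.mp ((mul_eq_zero.mp hy).resolve_right (hq y))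

end CubicWithRoot

theorem trace_algebraMap_of_odd_finrank {F L : Type*} [Field F] [Field L] [Finite F] [Finite L]
    [Algebra F L] [Algebra (ZMod 2) F] [Algebra (ZMod 2) L] [IsScalarTower (ZMod 2) F L]
    (hodd : Odd (Module.finrank F L)) (c : F) :
    Algebra.trace (ZMod 2) L (algebraMap F L c) = Algebra.trace (ZMod 2) F c := by
  have : Module.Finite F L := Module.Finite.of_finite
  rw [← Algebra.trace_trace (S := F), Algebra.trace_algebraMap, map_nsmul, nsmul_eq_mul,
    hodd.natCast_zmod_two, one_mul]

theorem exists_cofactor_root_of_irreducible {F L : Type*} [Field F] [Field L] [Algebra F L]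
    [Normal F L] {α β : F} (hirr : Irreducible (X ^ 3 + C α * X + C β)) {r : L}
    (hr : r ^ 3 + algebraMap F L α * r + algebraMap F L β = 0) :
    ∃ s, s ^ 2 + r * s + (r ^ 2 + algebraMap F L α) = 0 := by
  set q : L[X] := X ^ 2 + C r * X + C (r ^ 2 + algebraMap F L α)
  have hmonic : (X ^ 3 + C α * X + C β).Monic := by monicity!
  have hminpoly : X ^ 3 + C α * X + C β = minpoly F r :=
    minpoly.eq_of_irreducible_of_monic hirr (by simpa using hr) hmonic
  have hfactor : (X ^ 3 + C α * X + C β).map (algebraMap F L) = (X - C r) * q := by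
    have hβ : algebraMap F L β = -(r ^ 3 + algebraMap F L α * r) := by linear_combination hr
    simp only [q, Polynomial.map_add, Polynomial.map_mul, Polynomial.map_pow, map_X, map_C, hβ,
      map_neg, map_add, map_mul, map_pow]
    ring
  have hsplits : q.Splits := by
    rw [← splits_X_sub_C_mul_iff, ← hfactor, hminpoly]
    exact Normal.splits inferInstance r
  have hdeg : q.degree = 2 := by simp only [q]; compute_degree!
  obtain ⟨s, hs⟩ := hsplits.exists_eval_eq_zero (by rw [hdeg]; decide)
  exact ⟨s, by simpa [q] using hs⟩

theorem trace_eq_zero_of_cubic_ne_zero {F : Type*} [Field F] [Finite F] [Algebra (ZMod 2) F]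
    {α β : F} (hβ : β ≠ 0) (hroot : ∀ x, x ^ 3 + α * x + β ≠ 0) :
    Algebra.trace (ZMod 2) F (1 + α ^ 3 * β⁻¹ ^ 2) = 0 := by
  set p : F[X] := X ^ 3 + C α * X + C β
  have hdeg : p.natDegree = 3 := by simp only [p]; compute_degree!
  have hp0 : p ≠ 0 := ne_zero_of_natDegree_gt (n := 0) (by omega)
  have hirr : Irreducible p := by
    rw [irreducible_iff_roots_eq_zero_of_degree_le_three (by omega) (by omega),
      Multiset.eq_zero_iff_forall_notMem]
    intro x hx
    rw [mem_roots hp0] at hx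
    exact hroot x (by simpa [p] using hx)
  have : Fact (Irreducible p) := ⟨hirr⟩
  let L := AdjoinRoot p
  have : Module.Finite F L := (AdjoinRoot.powerBasis hp0).finite
  have : Finite L := Module.finite_of_finite F
  have hfinrank : Module.finrank F L = 3 := by
    rw [(AdjoinRoot.powerBasis hp0).finrank, AdjoinRoot.powerBasis_dim, hdeg]
  set r : L := AdjoinRoot.root p
  have hr : r ^ 3 + algebraMap F L α * r + algebraMap F L β = 0 := by
    have h : aeval r p = 0 := by rw [AdjoinRoot.aeval_eq, AdjoinRoot.mk_self]
    simpa [p] using h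
  rw [← trace_algebraMap_of_odd_finrank (L := L) (by rw [hfinrank]; decide)]
  simpa using (exists_cofactor_root_iff_trace_eq_zero
    ((map_ne_zero (algebraMap F L)).mpr hβ) hr).mp (exists_cofactor_root_of_irreducible hirr hr)

theorem sum_range_pow_two_pow_eq_algebraMap_trace {K : Type*} [Field K] [Fintype K]
    [Algebra (ZMod 2) K] {m : ℕ} (hK : Fintype.card K = 2 ^ m) (c : K) :
    ∑ i ∈ Finset.range m, c ^ 2 ^ i = algebraMap (ZMod 2) K (Algebra.trace (ZMod 2) K c) := by
  have hfinrank : Module.finrank (ZMod 2) K = m := by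
    apply Nat.pow_right_injective le_rfl
    change 2 ^ _ = 2 ^ m
    rw [← hK, Module.card_eq_pow_finrank (K := ZMod 2), ZMod.card]
  rw [algebraMap_trace_eq_sum_pow, hfinrank, Nat.card_zmod]

end FiniteField

open FiniteField in
theorem stmt_18_general (m : ℕ)
    (F : Type*) [Field F] [Fintype F] (hF : Fintype.card F = 2 ^ m)
    (α β : F) (hβ : β ≠ 0) :
    (∃! x : F, x ^ 3 + α * x + β = 0) ↔
    (∑ i ∈ Finset.range m, (1 + α ^ 3 * β⁻¹ ^ 2) ^ (2 ^ i)) = 1 := by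
  have : CharP F 2 := charP_of_card_eq_prime_pow hF
  let : Algebra (ZMod 2) F := ZMod.algebra F 2
  rw [sum_range_pow_two_pow_eq_algebraMap_trace hF,
    (algebraMap (ZMod 2) F).injective.eq_iff' (map_one _)]
  by_cases hroot : ∃ r, r ^ 3 + α * r + β = 0
  · obtain ⟨r, hr⟩ := hroot
    exact existsUnique_cubic_root_iff_trace_eq_one hβ hr
  · rw [not_exists] at hroot
    rw [trace_eq_zero_of_cubic_ne_zero hβ hroot]
    exact iff_of_false (fun ⟨x, hx, _⟩ => hroot x hx) zero_ne_one

theorem stmt_18 (m : ℕ) (hm : 0 < m)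
    (F : Type*) [Field F] [Fintype F] (hF : Fintype.card F = 2 ^ m)
    (α β : F) (hα : α ≠ 0) (hβ : β ≠ 0) :
    (∃! x : F, x ^ 3 + α * x + β = 0) ↔
    (∑ i ∈ Finset.range m, (1 + α ^ 3 * β⁻¹ ^ 2) ^ (2 ^ i)) = 1 :=
  stmt_18_general m F hF α β hβ
end

section
/- Let m be a positive integer and α, β ∈ F_{2^m}^* such that α is a square and α^{3/2} is defined (every element of F_{2^m} has a unique square root). The cubic x^3 + αx + β has three distinct roots in F_{2^m} if and only if p_m(β/α^{3/2}) = 0, where p_1(x) = p_2(x) = x and p_k(x) = p_{k-1}(x) + x^{2^{k-3}} p_{k-2}(x) for k ≥ 3. -/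
/-- The Berlekamp–Rumsey–Solomon polynomials `p_k` over `F_2`:
`p_1 = p_2 = X`, `p_k = p_{k-1} + X^{2^{k-3}} p_{k-2}` for `k ≥ 3`. -/
noncomputable def brsP : ℕ → Polynomial (ZMod 2)
  | 0 => 0
  | 1 => Polynomial.X
  | 2 => Polynomial.X
  | k + 3 => brsP (k + 2) + Polynomial.X ^ (2 ^ k) * brsP (k + 1)

/-!
Put `α = u ^ 2`, so that `s = u ^ 3` and `x = u * w` turns the cubic into `w ^ 3 + w + c` with
`c = β / s`. If `a` and `b` are two roots of it in an algebraic closure, the third one is `a + b`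
and `a ^ 2 + a * b + b ^ 2 = 1`. Every root satisfies `x ^ 4 = x ^ 2 + c * x`, so the iterated
Frobenius images of a root obey the recurrence of `p_k`; this gives
`p_(k+1)(c) = (a ^ 2 + a) * b ^ 2 ^ k + (b ^ 2 + b) * a ^ 2 ^ k`, and squaring,
`p_m(c) ^ 2 = c * (a * b ^ 2 ^ m + b * a ^ 2 ^ m)`. Hence `p_m(c) = 0` iff the Frobenius
`x ↦ x ^ 2 ^ m` multiplies `a` and `b` by a common factor. As it also preserves
`a ^ 2 + a * b + b ^ 2 = 1`, that factor squares to `1`, so it is `1` in characteristic `2`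
and `a`, `b`, `a + b` all lie in `F`.
-/

open Polynomial

def HasThreeDistinctRoots {K M : Type*} [Zero M] (f : K → M) : Prop :=
  ∃ x y z : K, x ≠ y ∧ x ≠ z ∧ y ≠ z ∧ f x = 0 ∧ f y = 0 ∧ f z = 0

theorem hasThreeDistinctRoots_congr {K L M N : Type*} [Zero M] [Zero N] (e : K ≃ L)
    {f : K → M} {g : L → N} (h : ∀ x, f x = 0 ↔ g (e x) = 0) :
    HasThreeDistinctRoots f ↔ HasThreeDistinctRoots g := by
  refine e.exists_congr fun x => e.exists_congr fun y => e.exists_congr fun z => ?_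
  simp only [e.injective.ne_iff, h]

theorem FiniteField.exists_algebraMap_eq_of_pow_card_eq {F K : Type*} [Field F] [Fintype F]
    [Field K] [Algebra F K] {x : K} (hx : x ^ Fintype.card F = x) :
    ∃ y : F, algebraMap F K y = x := by
  have hinj := (algebraMap F K).injective
  have hroots := roots_map_of_injective_of_card_eq_natDegree hinj
    (p := X ^ Fintype.card F - X) (by
      rw [roots_X_pow_card_sub_X, X_pow_card_sub_X_natDegree_eq _ Fintype.one_lt_card]
      rfl)
  have hmem : x ∈ ((X ^ Fintype.card F - X : F[X]).map (algebraMap F K)).roots := by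
    rw [mem_roots_map_of_injective hinj (X_pow_card_sub_X_ne_zero _ Fintype.one_lt_card)]
    simp [hx]
  rw [← hroots, roots_X_pow_card_sub_X] at hmem
  simpa using hmem

theorem IsAlgClosed.exists_root_and_sq_add_mul_add_sq_eq_one {K : Type*} [Field K]
    [IsAlgClosed K] (c : K) : ∃ a b : K, a ^ 3 + a + c = 0 ∧ a ^ 2 + a * b + b ^ 2 = 1 := by
  obtain ⟨a, ha⟩ := exists_root (X ^ 3 + X + C c)
    (by rw [show (X ^ 3 + X + C c : K[X]).degree = 3 by compute_degree!]; decide)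
  obtain ⟨b, hb⟩ := exists_root (X ^ 2 + C a * X + C (a ^ 2 - 1))
    (by rw [show (X ^ 2 + C a * X + C (a ^ 2 - 1) : K[X]).degree = 2 by compute_degree!]; decide)
  simp only [IsRoot, eval_add, eval_pow, eval_mul, eval_X, eval_C] at ha hb
  exact ⟨a, b, ha, by linear_combination hb⟩

theorem sq_eq_sq_of_mul_eq_mul_of_sq_add_mul_add_sq {R : Type*} [CommRing R] {a b A B : R}
    (h : a ^ 2 + a * b + b ^ 2 = 1) (h' : A ^ 2 + A * B + B ^ 2 = 1) (hp : a * B = b * A) :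
    A ^ 2 = a ^ 2 ∧ B ^ 2 = b ^ 2 :=
  ⟨by linear_combination a ^ 2 * h' - A ^ 2 * h + - (a * A + a * B + b * A) * hp,
   by linear_combination b ^ 2 * h' - B ^ 2 * h + (b * B + b * A + a * B) * hp⟩

section CharTwo

variable {K : Type*} [CommRing K] [CharP K 2] {a b c : K}

theorem pow_four_eq_of_root (ha : a ^ 3 + a + c = 0) : a ^ 4 = a ^ 2 + c * a := by
  linear_combination a * ha - (a * c + a ^ 2) * CharTwo.two_eq_zero (R := K)

theorem sq_sq_add_self_of_root (ha : a ^ 3 + a + c = 0) : (a ^ 2 + a) ^ 2 = c * a := by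
  linear_combination a * ha + a * (a ^ 2 - c) * CharTwo.two_eq_zero (R := K)

theorem pow_two_pow_add_two_of_root (ha : a ^ 3 + a + c = 0) (k : ℕ) :
    a ^ 2 ^ (k + 2) = a ^ 2 ^ (k + 1) + c ^ 2 ^ k * a ^ 2 ^ k := by
  rw [pow_succ, pow_succ, mul_assoc, mul_comm, pow_mul, show 2 * 2 = 4 by rfl,
    pow_four_eq_of_root ha, add_pow_char_pow, mul_pow, ← pow_mul, mul_comm]

theorem root_of_sq_add_mul_add_sq_eq_one (ha : a ^ 3 + a + c = 0)
    (hab : a ^ 2 + a * b + b ^ 2 = 1) : b ^ 3 + b + c = 0 := by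
  linear_combination ha + (b - a) * hab + (b - a) * CharTwo.two_eq_zero (R := K)

theorem mul_mul_add_eq_of_sq_add_mul_add_sq_eq_one (ha : a ^ 3 + a + c = 0)
    (hab : a ^ 2 + a * b + b ^ 2 = 1) : a * b * (a + b) = c := by
  linear_combination ha + a * hab - (a ^ 3 + c) * CharTwo.two_eq_zero (R := K)

theorem eval₂_brsP_succ (φ : ZMod 2 →+* K) (ha : a ^ 3 + a + c = 0)
    (hab : a ^ 2 + a * b + b ^ 2 = 1) :
    ∀ k : ℕ, (brsP (k + 1)).eval₂ φ c = (a ^ 2 + a) * b ^ 2 ^ k + (b ^ 2 + b) * a ^ 2 ^ k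
  | 0 => by
    rw [brsP, eval₂_X, ← mul_mul_add_eq_of_sq_add_mul_add_sq_eq_one ha hab]
    linear_combination -(a * b) * CharTwo.two_eq_zero (R := K)
  | 1 => by
    rw [brsP, eval₂_X, ← mul_mul_add_eq_of_sq_add_mul_add_sq_eq_one ha hab]
    linear_combination -(a ^ 2 * b ^ 2) * CharTwo.two_eq_zero (R := K)
  | k + 2 => by
    have hb := root_of_sq_add_mul_add_sq_eq_one ha hab
    rw [brsP, eval₂_add, eval₂_mul, eval₂_X_pow, eval₂_brsP_succ φ ha hab (k + 1),
      eval₂_brsP_succ φ ha hab k, pow_two_pow_add_two_of_root ha, pow_two_pow_add_two_of_root hb]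
    ring

theorem sq_eval₂_brsP_succ (φ : ZMod 2 →+* K) (ha : a ^ 3 + a + c = 0)
    (hab : a ^ 2 + a * b + b ^ 2 = 1) (k : ℕ) :
    ((brsP (k + 1)).eval₂ φ c) ^ 2 = c * (a * b ^ 2 ^ (k + 1) + b * a ^ 2 ^ (k + 1)) := by
  have hb := root_of_sq_add_mul_add_sq_eq_one ha hab
  rw [eval₂_brsP_succ φ ha hab, CharTwo.add_sq, mul_pow, mul_pow, ← pow_mul, ← pow_mul,
    ← pow_succ, sq_sq_add_self_of_root ha, sq_sq_add_self_of_root hb]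
  ring

end CharTwo

section CharTwoField

variable {K : Type*} [Field K] [CharP K 2] {a b c : K}

theorem sq_add_mul_add_sq_eq_one_of_roots (ha : a ^ 3 + a + c = 0) (hb : b ^ 3 + b + c = 0)
    (hab : a ≠ b) : a ^ 2 + a * b + b ^ 2 = 1 := by
  have h : (a - b) * (a ^ 2 + a * b + b ^ 2 - 1) = 0 := by
    linear_combination ha - hb + (b - a) * CharTwo.two_eq_zero (R := K)
  exact sub_eq_zero.mp ((mul_eq_zero.mp h).resolve_left (sub_ne_zero.mpr hab))

theorem hasThreeDistinctRoots_of_sq_add_mul_add_sq_eq_one (hc : c ≠ 0)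
    (ha : a ^ 3 + a + c = 0) (hab : a ^ 2 + a * b + b ^ 2 = 1) :
    HasThreeDistinctRoots fun x : K => x ^ 3 + x + c := by
  rw [← mul_mul_add_eq_of_sq_add_mul_add_sq_eq_one ha hab, mul_ne_zero_iff, mul_ne_zero_iff] at hc
  obtain ⟨⟨ha0, hb0⟩, hab0⟩ := hc
  refine ⟨a, b, a + b, ?_, ?_, ?_, ha, root_of_sq_add_mul_add_sq_eq_one ha hab, ?_⟩
  · exact fun h => hab0 (by rw [h, CharTwo.add_self_eq_zero])
  · exact fun h => hb0 (by linear_combination -h)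
  · exact fun h => ha0 (by linear_combination -h)
  · exact root_of_sq_add_mul_add_sq_eq_one ha
      (by linear_combination hab + (a ^ 2 + a * b) * CharTwo.two_eq_zero (R := K))

theorem eval₂_brsP_eq_zero_iff (φ : ZMod 2 →+* K) (hc : c ≠ 0) (ha : a ^ 3 + a + c = 0)
    (hab : a ^ 2 + a * b + b ^ 2 = 1) {m : ℕ} (hm : 0 < m) :
    (brsP m).eval₂ φ c = 0 ↔ a * b ^ 2 ^ m = b * a ^ 2 ^ m := by
  obtain ⟨k, rfl⟩ := Nat.exists_eq_add_one_of_ne_zero hm.ne'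
  rw [← pow_eq_zero_iff two_ne_zero, sq_eval₂_brsP_succ φ ha hab, mul_eq_zero,
    or_iff_right hc, CharTwo.add_eq_zero]

end CharTwoField

section FiniteField

variable {m : ℕ} {F : Type*} [Field F] [Fintype F] [CharP F 2] {c : F}

theorem eval₂_brsP_eq_zero_of_hasThreeDistinctRoots (hm : 0 < m)
    (hF : Fintype.card F = 2 ^ m) (hc : c ≠ 0)
    (h : HasThreeDistinctRoots fun x : F => x ^ 3 + x + c) :
    (brsP m).eval₂ (ZMod.castHom (dvd_refl 2) F) c = 0 := by
  obtain ⟨x, y, -, hxy, -, -, hx, hy, -⟩ := h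
  rw [eval₂_brsP_eq_zero_iff _ hc hx (sq_add_mul_add_sq_eq_one_of_roots hx hy hxy) hm, ← hF,
    FiniteField.pow_card, FiniteField.pow_card, mul_comm]

theorem hasThreeDistinctRoots_of_eval₂_brsP_eq_zero (hm : 0 < m)
    (hF : Fintype.card F = 2 ^ m) (hc : c ≠ 0)
    (h : (brsP m).eval₂ (ZMod.castHom (dvd_refl 2) F) c = 0) :
    HasThreeDistinctRoots fun x : F => x ^ 3 + x + c := by
  let K := AlgebraicClosure F
  have : CharP K 2 := charP_of_injective_algebraMap (algebraMap F K).injective 2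
  obtain ⟨a, b, ha, hab⟩ :=
    IsAlgClosed.exists_root_and_sq_add_mul_add_sq_eq_one (algebraMap F K c)
  have hK := hom_eval₂ (brsP m) (ZMod.castHom (dvd_refl 2) F) (algebraMap F K) c
  rw [h, map_zero, eq_comm, eval₂_brsP_eq_zero_iff _ (by simpa using hc) ha hab hm] at hK
  have hfrob := congrArg (iterateFrobenius K 2 m) hab
  simp only [map_add, map_mul, map_pow, map_one, iterateFrobenius_def] at hfrob
  obtain ⟨hA, hB⟩ := sq_eq_sq_of_mul_eq_mul_of_sq_add_mul_add_sq hab hfrob hK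
  obtain ⟨x, rfl⟩ := FiniteField.exists_algebraMap_eq_of_pow_card_eq (x := a)
    (hF ▸ CharTwo.sq_injective hA)
  obtain ⟨y, rfl⟩ := FiniteField.exists_algebraMap_eq_of_pow_card_eq (x := b)
    (hF ▸ CharTwo.sq_injective hB)
  exact hasThreeDistinctRoots_of_sq_add_mul_add_sq_eq_one hc
    ((algebraMap F K).injective (by simpa using ha))
    ((algebraMap F K).injective (by simpa using hab))

theorem hasThreeDistinctRoots_iff_eval₂_brsP_eq_zero (hm : 0 < m)
    (hF : Fintype.card F = 2 ^ m) (hc : c ≠ 0) :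
    (HasThreeDistinctRoots fun x : F => x ^ 3 + x + c) ↔
      (brsP m).eval₂ (ZMod.castHom (dvd_refl 2) F) c = 0 :=
  ⟨eval₂_brsP_eq_zero_of_hasThreeDistinctRoots hm hF hc,
    hasThreeDistinctRoots_of_eval₂_brsP_eq_zero hm hF hc⟩

end FiniteField

theorem stmt_19 (m : ℕ) (hm : 0 < m)
    (F : Type*) [Field F] [Fintype F] [CharP F 2]
    (hF : Fintype.card F = 2 ^ m)
    (α β s : F) (hα : α ≠ 0) (hβ : β ≠ 0) (hs : s ^ 2 = α ^ 3) :
    (∃ x y z : F, x ≠ y ∧ x ≠ z ∧ y ≠ z ∧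
      x ^ 3 + α * x + β = 0 ∧ y ^ 3 + α * y + β = 0 ∧ z ^ 3 + α * z + β = 0) ↔
    Polynomial.eval₂ (ZMod.castHom (dvd_refl 2) F) (β / s) (brsP m) = 0 := by
  obtain ⟨u, rfl⟩ := FiniteField.isSquare_of_char_two (ringChar.eq F 2) α
  have hu : u ≠ 0 := by rintro rfl; simp at hα
  obtain rfl : s = u ^ 3 := CharTwo.sq_inj.mp (by rw [hs]; ring)
  have hc : β / u ^ 3 ≠ 0 := div_ne_zero hβ (pow_ne_zero 3 hu)
  have hscale : ∀ w, w ^ 3 + w + β / u ^ 3 = 0 ↔ (u * w) ^ 3 + u * u * (u * w) + β = 0 := by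
    intro w
    rw [show (u * w) ^ 3 + u * u * (u * w) + β = u ^ 3 * (w ^ 3 + w + β / u ^ 3) by
      field_simp, mul_eq_zero, or_iff_right (pow_ne_zero 3 hu)]
  exact (hasThreeDistinctRoots_congr (Equiv.mulLeft₀ u hu) hscale).symm.trans
    (hasThreeDistinctRoots_iff_eval₂_brsP_eq_zero hm hF hc)
end
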